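/- Let (Ω, ℱ, P) be a probability space. Let Z be a measurable space, D a distribution on Z, and Φ : ℝ^d × ℝ^p × Z → ℝ^m measurable with: ‖Φ(u₁, v₁, z) − Φ(u₂, v₂, z)‖² ≤ 2L² (‖u₁ − u₂‖² + ‖v₁ − v₂‖²) for all inputs and all z; Φ̄(u, v) = E_{ζ∼D}[Φ(u, v, ζ)] exists; and E_{ζ∼D} ‖Φ(u, v, ζ) − Φ̄(u, v)‖² ≤ σ² for all (u, v). Fix s ≥ 0, and let (x_t, y_t)_{t ≥ s} be square-integrable random sequences and (v_t)_{t ≥ s} be defined as follows: v_s = (1/n) Σ_{i=1}^{n} Φ(x_s, y_s, ζ_s^i), and for t > s, v_t = v_{t−1} + (1/b) Σ_{i=1}^{b} ( Φ(x_t, y_t, ζ_t^i) − Φ(x_{t−1}, y_{t−1}, ζ_t^i) ), where for each t the batch (ζ_t^i)_i is i.i.d. with law D and independent of the σ-algebra generated by all batches (ζ_r^i) with r < t together with (x_r, y_r)_{r ≤ t}, and (x_t, y_t) is measurable with respect to that σ-algebra. Then for every t ≥ s: E‖v_t − Φ̄(x_t, y_t)‖² ≤ (2L²/b) Σ_{i=s}^{t−1}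 E[ ‖x_{i+1} − x_i‖² + ‖y_{i+1} − y_i‖² ] + σ²/n. -/

import Mathlib

/-!
Write `q_t = (x_t, y_t)`, `ψ(q, z) = Φ(q, z) - Φ̄(q)` and `e_t = v_t - Φ̄(q_t)`. Then `e_s` is
the mean of `n` centred samples and
`e_{t+1} = e_t + b⁻¹ Σ_i (ψ(q_{t+1}, ζ_{t+1}^i) - ψ(q_t, ζ_{t+1}^i))`. The fresh batch is
independent of everything that determines `e_t` and the iterates, so freezing that data (Fubini
for the product law) makes the new summands orthogonal in `L²` to `e_t` and to each other. Hence
`E‖e_{t+1}‖² ≤ E‖e_t‖² + b⁻¹ E[2L²(‖Δx‖² + ‖Δy‖²)]`, a variance being at most the corresponding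
second moment, and the bound follows by induction from `E‖e_s‖² ≤ σ²/n`.
If some `ψ(q, ·)` is not square integrable then, by the Lipschitz bound, none is; then no `e_t` is
square integrable and the left-hand side is the junk value `0`.
-/

open scoped RealInnerProductSpace
open MeasureTheory ProbabilityTheory

section InnerProduct

variable {Ω E : Type*} [MeasurableSpace Ω] {μ : Measure Ω}
  [NormedAddCommGroup E] [InnerProductSpace ℝ E]

theorem MeasureTheory.MemLp.integrable_inner {f g : Ω → E} (hf : MemLp f 2 μ)
    (hg : MemLp g 2 μ) : Integrable (fun ω => ⟪f ω, g ω⟫) μ :=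
  (L2.integrable_inner (hf.toLp f) (hg.toLp g)).congr <| by
    filter_upwards [hf.coeFn_toLp, hg.coeFn_toLp] with ω hfω hgω
    rw [hfω, hgω]

theorem integral_norm_sum_sq_of_pairwise_integral_inner_eq_zero {ι : Type*} [Fintype ι]
    {X : ι → Ω → E} (hX : ∀ i, MemLp (X i) 2 μ)
    (horth : Pairwise fun i j => ∫ ω, ⟪X i ω, X j ω⟫ ∂μ = 0) :
    ∫ ω, ‖∑ i, X i ω‖ ^ 2 ∂μ = ∑ i, ∫ ω, ‖X i ω‖ ^ 2 ∂μ := by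
  classical
  have hint : ∀ i j, Integrable (fun ω => ⟪X i ω, X j ω⟫) μ := fun i j =>
    (hX i).integrable_inner (hX j)
  simp_rw [← real_inner_self_eq_norm_sq, sum_inner, inner_sum]
  rw [integral_finsetSum _ fun i _ => integrable_finsetSum _ fun j _ => hint i j]
  refine Finset.sum_congr rfl fun i _ => ?_
  rw [integral_finsetSum _ fun j _ => hint i j,
    Finset.sum_eq_single i (fun j _ hji => horth hji.symm) (by simp)]

theorem integral_norm_sub_integral_sq_le [CompleteSpace E] [IsProbabilityMeasure μ]
    {X : Ω → E} (hX : MemLp X 2 μ) :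
    ∫ ω, ‖X ω - ∫ ω', X ω' ∂μ‖ ^ 2 ∂μ ≤ ∫ ω, ‖X ω‖ ^ 2 ∂μ := by
  set m := ∫ ω, X ω ∂μ
  have hX1 : Integrable X μ := hX.integrable one_le_two
  have hX2 : Integrable (fun ω => ‖X ω‖ ^ 2) μ := hX.integrable_norm_pow two_ne_zero
  have hinner : Integrable (fun ω => 2 * ⟪X ω, m⟫) μ := (hX1.inner_const m).const_mul 2
  have hmean : ∫ ω, 2 * ⟪X ω, m⟫ ∂μ = 2 * ‖m‖ ^ 2 := by
    simp_rw [real_inner_comm m]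
    rw [integral_const_mul, integral_inner hX1, real_inner_self_eq_norm_sq]
  calc ∫ ω, ‖X ω - m‖ ^ 2 ∂μ = ∫ ω, (‖X ω‖ ^ 2 - 2 * ⟪X ω, m⟫ + ‖m‖ ^ 2) ∂μ := by
        simp_rw [norm_sub_sq_real]
    _ = ∫ ω, ‖X ω‖ ^ 2 ∂μ - ‖m‖ ^ 2 := by
        rw [integral_add (f := fun ω => ‖X ω‖ ^ 2 - 2 * ⟪X ω, m⟫) (hX2.sub hinner)
          (integrable_const _), integral_sub hX2 hinner, hmean]
        simp only [integral_const, probReal_univ, one_smul]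
        ring
    _ ≤ ∫ ω, ‖X ω‖ ^ 2 ∂μ := sub_le_self _ (sq_nonneg _)

end InnerProduct

section Centering

variable {Z E : Type*} [MeasurableSpace Z] {D : Measure Z} [NormedAddCommGroup E] {f g : Z → E}

theorem memLp_two_sub_of_norm_sub_sq_le [IsFiniteMeasure D] (hf : AEStronglyMeasurable f D)
    (hg : AEStronglyMeasurable g D) {C : ℝ} (hC : ∀ z, ‖f z - g z‖ ^ 2 ≤ C) :
    MemLp (fun z => f z - g z) 2 D :=
  MemLp.of_bound (hf.sub hg) √C (ae_of_all _ fun z => Real.le_sqrt_of_sq_le (hC z))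

theorem memLp_two_centered_sub [NormedSpace ℝ E] [IsFiniteMeasure D] (hf : Integrable f D)
    (hg : Integrable g D) {C : ℝ} (hC : ∀ z, ‖f z - g z‖ ^ 2 ≤ C) :
    MemLp (fun z => (f z - ∫ z', f z' ∂D) - (g z - ∫ z', g z' ∂D)) 2 D :=
  ((memLp_two_sub_of_norm_sub_sq_le hf.1 hg.1 hC).sub
    (memLp_const ((∫ z, f z ∂D) - ∫ z, g z ∂D))).ae_eq
    (ae_of_all _ fun z => by simp only [Pi.sub_apply]; abel)

theorem integral_norm_centered_sub_sq_le [InnerProductSpace ℝ E] [CompleteSpace E]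
    [IsProbabilityMeasure D] (hf : Integrable f D) (hg : Integrable g D) {C : ℝ}
    (hC : ∀ z, ‖f z - g z‖ ^ 2 ≤ C) :
    ∫ z, ‖(f z - ∫ z', f z' ∂D) - (g z - ∫ z', g z' ∂D)‖ ^ 2 ∂D ≤ C := by
  have hfg := memLp_two_sub_of_norm_sub_sq_le hf.1 hg.1 hC
  calc ∫ z, ‖(f z - ∫ z', f z' ∂D) - (g z - ∫ z', g z' ∂D)‖ ^ 2 ∂D
      = ∫ z, ‖(f z - g z) - ∫ z', (f z' - g z') ∂D‖ ^ 2 ∂D := by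
        rw [integral_sub hf hg]
        simp_rw [sub_sub_sub_comm]
    _ ≤ ∫ z, ‖f z - g z‖ ^ 2 ∂D := integral_norm_sub_integral_sq_le hfg
    _ ≤ ∫ _z, C ∂D := integral_mono (hfg.integrable_norm_pow two_ne_zero) (integrable_const C) hC
    _ = C := by simp

end Centering

section Averages

variable {E : Type*} [AddCommGroup E] [Module ℝ E]

theorem inv_smul_sum_range_sub {n : ℕ} (hn : n ≠ 0) (f : ℕ → E) (c : E) :
    (n : ℝ)⁻¹ • ∑ i ∈ Finset.range n, f i - c = (n : ℝ)⁻¹ • ∑ i : Fin n, (f i - c) := by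
  rw [Fin.sum_univ_eq_sum_range (fun i => f i - c), Finset.sum_sub_distrib, Finset.sum_const,
    Finset.card_range, smul_sub, ← Nat.cast_smul_eq_nsmul ℝ, smul_smul,
    inv_mul_cancel₀ (Nat.cast_ne_zero.mpr hn), one_smul]

theorem add_inv_smul_sum_range_sub_sub {b : ℕ} (hb : b ≠ 0) (u c c' : E) (f g : ℕ → E) :
    u + (b : ℝ)⁻¹ • ∑ i ∈ Finset.range b, (f i - g i) - c'
      = u - c + (b : ℝ)⁻¹ • ∑ i : Fin b, ((f i - c') - (g i - c)) := by
  simp_rw [sub_sub_sub_comm (f _) c' (g _) c]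
  rw [← inv_smul_sum_range_sub hb (fun i => f i - g i) (c' - c)]
  abel

end Averages

section Freezing

variable {Ω α β F : Type*} [MeasurableSpace Ω] {μ : Measure Ω} [IsFiniteMeasure μ]
  [MeasurableSpace α] [MeasurableSpace β] [NormedAddCommGroup F]
  {M : Ω → α} {ξ : Ω → β}

theorem ProbabilityTheory.IndepFun.integrable_comp_prodMk_iff (h : IndepFun M ξ μ)
    (hM : Measurable M) (hξ : Measurable ξ) {g : α × β → F}
    (hg : AEStronglyMeasurable g ((μ.map M).prod (μ.map ξ))) :
    Integrable (fun ω => g (M ω, ξ ω)) μ ↔ Integrable g ((μ.map M).prod (μ.map ξ)) := by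
  rw [← h.map_prod_eq_prod_map_map hM.aemeasurable hξ.aemeasurable] at hg ⊢
  exact (integrable_map_measure hg (hM.prodMk hξ).aemeasurable).symm

theorem ProbabilityTheory.IndepFun.integral_comp_prodMk [NormedSpace ℝ F] [CompleteSpace F]
    (h : IndepFun M ξ μ) (hM : Measurable M) (hξ : Measurable ξ) {g : α × β → F}
    (hg : StronglyMeasurable g) (hint : Integrable (fun ω => g (M ω, ξ ω)) μ) :
    ∫ ω, g (M ω, ξ ω) ∂μ = ∫ ω, ∫ z, g (M ω, z) ∂(μ.map ξ) ∂μ := by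
  have hprod := (h.integrable_comp_prodMk_iff hM hξ hg.aestronglyMeasurable).mp hint
  rw [← integral_map (hM.prodMk hξ).aemeasurable hg.aestronglyMeasurable,
    h.map_prod_eq_prod_map_map hM.aemeasurable hξ.aemeasurable, integral_prod g hprod,
    integral_map hM.aemeasurable hg.integral_prod_right'.aestronglyMeasurable]

end Freezing

section Moments

variable {Ω α β E : Type*} [MeasurableSpace Ω] {μ : Measure Ω} [IsFiniteMeasure μ]
  [MeasurableSpace α] [MeasurableSpace β] [NormedAddCommGroup E] [MeasurableSpace E]
  [BorelSpace E]
  {D : Measure β} {ξ : Ω → β} {W : Ω → α} {φ : α → β → E}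

theorem ProbabilityTheory.IndepFun.integrable_norm_sq_comp (h : IndepFun W ξ μ)
    (hW : Measurable W) (hξ : Measurable ξ) (hlaw : μ.map ξ = D)
    (hφ : Measurable (Function.uncurry φ)) (hφ2 : ∀ w, MemLp (φ w) 2 D) {V : α → ℝ}
    (hV : Measurable V) (hφV : ∀ w, ∫ z, ‖φ w z‖ ^ 2 ∂D ≤ V w)
    (hVint : Integrable (fun ω => V (W ω)) μ) :
    Integrable (fun ω => ‖φ (W ω) (ξ ω)‖ ^ 2) μ := by
  subst hlaw
  have hg : Measurable fun q : α × β => ‖φ q.1 q.2‖ ^ 2 := hφ.norm.pow_const 2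
  refine (h.integrable_comp_prodMk_iff hW hξ hg.aestronglyMeasurable).mpr
    ((integrable_prod_iff hg.aestronglyMeasurable).mpr
      ⟨ae_of_all _ fun w => (hφ2 w).integrable_norm_pow two_ne_zero, ?_⟩)
  refine ((integrable_map_measure hV.aestronglyMeasurable hW.aemeasurable).mpr hVint).mono'
    hg.norm.stronglyMeasurable.integral_prod_right'.aestronglyMeasurable (ae_of_all _ fun w => ?_)
  have hnonneg : 0 ≤ ∫ z, ‖φ w z‖ ^ 2 ∂(μ.map ξ) := integral_nonneg fun z => sq_nonneg _
  simpa [abs_of_nonneg hnonneg] using hφV w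

theorem ProbabilityTheory.IndepFun.integral_norm_sq_comp_le (h : IndepFun W ξ μ)
    (hW : Measurable W) (hξ : Measurable ξ) (hlaw : μ.map ξ = D)
    (hφ : Measurable (Function.uncurry φ)) (hφ2 : ∀ w, MemLp (φ w) 2 D) {V : α → ℝ}
    (hV : Measurable V) (hφV : ∀ w, ∫ z, ‖φ w z‖ ^ 2 ∂D ≤ V w)
    (hVint : Integrable (fun ω => V (W ω)) μ) :
    ∫ ω, ‖φ (W ω) (ξ ω)‖ ^ 2 ∂μ ≤ ∫ ω, V (W ω) ∂μ := by
  have hint := h.integrable_norm_sq_comp hW hξ hlaw hφ hφ2 hV hφV hVint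
  subst hlaw
  have hg : Measurable fun q : α × β => ‖φ q.1 q.2‖ ^ 2 := hφ.norm.pow_const 2
  rw [h.integral_comp_prodMk hW hξ hg.stronglyMeasurable hint]
  exact integral_mono_of_nonneg (ae_of_all _ fun ω => integral_nonneg fun z => sq_nonneg _)
    hVint (ae_of_all _ fun ω => hφV (W ω))

theorem ProbabilityTheory.IndepFun.integral_inner_comp_eq_zero [InnerProductSpace ℝ E]
    [CompleteSpace E] [SecondCountableTopology E] {X : Ω → E}
    (h : IndepFun (fun ω => (X ω, W ω)) ξ μ) (hX : Measurable X) (hW : Measurable W)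
    (hξ : Measurable ξ) (hlaw : μ.map ξ = D) (hφ : Measurable (Function.uncurry φ))
    (hφint : ∀ w, Integrable (φ w) D) (hφ0 : ∀ w, ∫ z, φ w z ∂D = 0)
    (hint : Integrable (fun ω => ⟪X ω, φ (W ω) (ξ ω)⟫) μ) :
    ∫ ω, ⟪X ω, φ (W ω) (ξ ω)⟫ ∂μ = 0 := by
  subst hlaw
  have hg : Measurable fun q : (E × α) × β => ⟪q.1.1, φ q.1.2 q.2⟫ :=
    measurable_fst.fst.inner (hφ.comp (measurable_fst.snd.prodMk measurable_snd))
  rw [h.integral_comp_prodMk (hX.prodMk hW) hξ hg.stronglyMeasurable hint]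
  simp [integral_inner (hφint _), hφ0]

end Moments

section FreshBatch

variable {Ω Z ι : Type*}

structure IsFreshBatch (G : MeasurableSpace Ω) [MeasurableSpace Ω] [mZ : MeasurableSpace Z]
    (μ : Measure Ω) (ξ : ι → Ω → Z) (D : Measure Z) : Prop where
  map_eq : ∀ i, μ.map (ξ i) = D
  iIndep : iIndep (fun j : Option ι => j.elim G fun i => mZ.comap (ξ i)) μ

variable {G : MeasurableSpace Ω} [mΩ : MeasurableSpace Ω] [mZ : MeasurableSpace Z]
  {μ : Measure Ω} {ξ : ι → Ω → Z} {D : Measure Z}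

theorem IsFreshBatch.indepFun (h : IsFreshBatch G μ ξ D) (hG : G ≤ mΩ)
    (hξ : ∀ i, Measurable (ξ i)) {α : Type*} [MeasurableSpace α] {R : Ω → α}
    (hR : Measurable[G] R) (i : ι) :
    IndepFun (fun ω => (R ω, fun j : {j // j ≠ i} => ξ j ω)) (ξ i) μ := by
  set F : Option ι → MeasurableSpace Ω := fun j => j.elim G fun i => mZ.comap (ξ i)
  have hF : ∀ j, F j ≤ mΩ := by
    rintro (_ | j)
    exacts [hG, (hξ j).comap_le]
  have hindep := indep_biSup_compl hF h.iIndep {some i}ᶜ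
  rw [compl_compl] at hindep
  rw [IndepFun_iff_Indep]
  refine indep_of_indep_of_le_right (indep_of_indep_of_le_left hindep ?_)
    (le_biSup F (Set.mem_singleton (some i)))
  refine Measurable.comap_le (Measurable.prodMk ?_ ?_)
  · exact hR.mono (le_biSup F (show none ∈ ({some i}ᶜ : Set _) by simp)) le_rfl
  · refine @measurable_pi_lambda Ω {j // j ≠ i} (fun _ => Z) (⨆ j ∈ ({some i}ᶜ : Set _), F j)
      _ _ fun j => ?_
    exact (comap_measurable (ξ j)).mono
      (le_biSup F (show some j.1 ∈ ({some i}ᶜ : Set _) by simpa using j.2)) le_rfl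

end FreshBatch

section BatchMean

variable {Ω Z ι α E : Type*} {G : MeasurableSpace Ω} [mΩ : MeasurableSpace Ω]
  [MeasurableSpace Z] {μ : Measure Ω} [IsFiniteMeasure μ] {ξ : ι → Ω → Z} {D : Measure Z}
  [MeasurableSpace α] [NormedAddCommGroup E] [MeasurableSpace E] [BorelSpace E]
  [SecondCountableTopology E] {W : Ω → α} {φ : α → Z → E}

theorem IsFreshBatch.memLp_comp (h : IsFreshBatch G μ ξ D) (hG : G ≤ mΩ)
    (hξ : ∀ i, Measurable (ξ i)) (hW : Measurable[G] W) (hφ : Measurable (Function.uncurry φ))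
    (hφ2 : ∀ w, MemLp (φ w) 2 D) {V : α → ℝ} (hV : Measurable V)
    (hφV : ∀ w, ∫ z, ‖φ w z‖ ^ 2 ∂D ≤ V w) (hVint : Integrable (fun ω => V (W ω)) μ) (i : ι) :
    MemLp (fun ω => φ (W ω) (ξ i ω)) 2 μ := by
  have hW' : Measurable W := hW.mono hG le_rfl
  have hindep : IndepFun W (ξ i) μ := (h.indepFun hG hξ hW i).comp measurable_fst measurable_id
  exact (memLp_two_iff_integrable_sq_norm (hφ.comp (hW'.prodMk (hξ i))).aestronglyMeasurable).mpr
    (hindep.integrable_norm_sq_comp hW' (hξ i) (h.map_eq i) hφ hφ2 hV hφV hVint)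

theorem IsFreshBatch.memLp_mean [NormedSpace ℝ E] [Fintype ι] (h : IsFreshBatch G μ ξ D)
    (hG : G ≤ mΩ) (hξ : ∀ i, Measurable (ξ i)) (hW : Measurable[G] W)
    (hφ : Measurable (Function.uncurry φ)) (hφ2 : ∀ w, MemLp (φ w) 2 D) {V : α → ℝ}
    (hV : Measurable V) (hφV : ∀ w, ∫ z, ‖φ w z‖ ^ 2 ∂D ≤ V w)
    (hVint : Integrable (fun ω => V (W ω)) μ) (c : ℝ) :
    MemLp (fun ω => c • ∑ i, φ (W ω) (ξ i ω)) 2 μ :=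
  (memLp_finsetSum _ fun i _ => h.memLp_comp hG hξ hW hφ hφ2 hV hφV hVint i).const_smul c

variable [InnerProductSpace ℝ E] [CompleteSpace E]

theorem IsFreshBatch.integral_inner_comp_eq_zero (h : IsFreshBatch G μ ξ D) (hG : G ≤ mΩ)
    (hξ : ∀ i, Measurable (ξ i)) {A : Ω → E} (hA : Measurable[G] A) (hW : Measurable[G] W)
    (hφ : Measurable (Function.uncurry φ)) (hφint : ∀ w, Integrable (φ w) D)
    (hφ0 : ∀ w, ∫ z, φ w z ∂D = 0) (i : ι)
    (hint : Integrable (fun ω => ⟪A ω, φ (W ω) (ξ i ω)⟫) μ) :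
    ∫ ω, ⟪A ω, φ (W ω) (ξ i ω)⟫ ∂μ = 0 :=
  ((h.indepFun hG hξ (hA.prodMk hW) i).comp measurable_fst
    measurable_id).integral_inner_comp_eq_zero (hA.mono hG le_rfl) (hW.mono hG le_rfl) (hξ i)
    (h.map_eq i) hφ hφint hφ0 hint

theorem IsFreshBatch.integral_inner_comp_comp_eq_zero (h : IsFreshBatch G μ ξ D) (hG : G ≤ mΩ)
    (hξ : ∀ i, Measurable (ξ i)) (hW : Measurable[G] W) (hφ : Measurable (Function.uncurry φ))
    (hφint : ∀ w, Integrable (φ w) D) (hφ0 : ∀ w, ∫ z, φ w z ∂D = 0) {i j : ι} (hji : j ≠ i)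
    (hint : Integrable (fun ω => ⟪φ (W ω) (ξ j ω), φ (W ω) (ξ i ω)⟫) μ) :
    ∫ ω, ⟪φ (W ω) (ξ j ω), φ (W ω) (ξ i ω)⟫ ∂μ = 0 := by
  have hW' : Measurable W := hW.mono hG le_rfl
  have hindep : IndepFun (fun ω => (φ (W ω) (ξ j ω), W ω)) (ξ i) μ :=
    (h.indepFun hG hξ hW i).comp (φ := fun p => (φ p.1 (p.2 ⟨j, hji⟩), p.1))
      ((hφ.comp (measurable_fst.prodMk ((measurable_pi_apply _).comp measurable_snd))).prodMk
        measurable_fst) measurable_id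
  exact hindep.integral_inner_comp_eq_zero (hφ.comp (hW'.prodMk (hξ j))) hW' (hξ i)
    (h.map_eq i) hφ hφint hφ0 hint

theorem IsFreshBatch.integral_norm_add_smul_sum_sq [Fintype ι] (h : IsFreshBatch G μ ξ D)
    (hG : G ≤ mΩ) (hξ : ∀ i, Measurable (ξ i)) {A : Ω → E} (hA : Measurable[G] A)
    (hA2 : MemLp A 2 μ) (hW : Measurable[G] W) (hφ : Measurable (Function.uncurry φ))
    (hφint : ∀ w, Integrable (φ w) D) (hφ0 : ∀ w, ∫ z, φ w z ∂D = 0)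
    (hY2 : ∀ i, MemLp (fun ω => φ (W ω) (ξ i ω)) 2 μ) (c : ℝ) :
    ∫ ω, ‖A ω + c • ∑ i, φ (W ω) (ξ i ω)‖ ^ 2 ∂μ
      = ∫ ω, ‖A ω‖ ^ 2 ∂μ + c ^ 2 * ∑ i, ∫ ω, ‖φ (W ω) (ξ i ω)‖ ^ 2 ∂μ := by
  have hcφ : Measurable (Function.uncurry fun w z => c • φ w z) := hφ.const_smul c
  have hcφint : ∀ w, Integrable (fun z => c • φ w z) D := fun w => (hφint w).smul c
  have hcφ0 : ∀ w, ∫ z, c • φ w z ∂D = 0 := fun w => by rw [integral_smul, hφ0, smul_zero]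
  set X : Option ι → Ω → E := fun j => j.elim A fun i ω => c • φ (W ω) (ξ i ω) with hX
  have hX2 : ∀ j, MemLp (X j) 2 μ := by
    rintro (_ | i)
    exacts [hA2, (hY2 i).const_smul c]
  have horth : Pairwise fun j j' => ∫ ω, ⟪X j ω, X j' ω⟫ ∂μ = 0 := by
    rintro (_ | j) (_ | i) hji
    · exact absurd rfl hji
    · exact h.integral_inner_comp_eq_zero hG hξ hA hW hcφ hcφint hcφ0 i
        ((hX2 none).integrable_inner (hX2 (some i)))
    · simp_rw [real_inner_comm (X none _)]
      exact h.integral_inner_comp_eq_zero hG hξ hA hW hcφ hcφint hcφ0 j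
        ((hX2 none).integrable_inner (hX2 (some j)))
    · exact h.integral_inner_comp_comp_eq_zero hG hξ hW hcφ hcφint hcφ0
        (fun hji' => hji (congrArg some hji')) ((hX2 (some j)).integrable_inner (hX2 (some i)))
  have hsum : ∀ ω, A ω + c • ∑ i, φ (W ω) (ξ i ω) = ∑ j, X j ω := fun ω => by
    simp [hX, Fintype.sum_option, Finset.smul_sum]
  simp_rw [hsum]
  rw [integral_norm_sum_sq_of_pairwise_integral_inner_eq_zero hX2 horth, Fintype.sum_option,
    Finset.mul_sum]
  simp only [hX, Option.elim, norm_smul, mul_pow, integral_const_mul, Real.norm_eq_abs, sq_abs]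

theorem IsFreshBatch.integral_norm_add_mean_sq_le [Fintype ι] [IsFiniteMeasure D]
    (h : IsFreshBatch G μ ξ D) (hG : G ≤ mΩ) (hξ : ∀ i, Measurable (ξ i)) {A : Ω → E}
    (hA : Measurable[G] A) (hA2 : MemLp A 2 μ) (hW : Measurable[G] W)
    (hφ : Measurable (Function.uncurry φ)) (hφ2 : ∀ w, MemLp (φ w) 2 D)
    (hφ0 : ∀ w, ∫ z, φ w z ∂D = 0) {V : α → ℝ} (hV : Measurable V)
    (hφV : ∀ w, ∫ z, ‖φ w z‖ ^ 2 ∂D ≤ V w) (hVint : Integrable (fun ω => V (W ω)) μ) :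
    ∫ ω, ‖A ω + (Fintype.card ι : ℝ)⁻¹ • ∑ i, φ (W ω) (ξ i ω)‖ ^ 2 ∂μ
      ≤ ∫ ω, ‖A ω‖ ^ 2 ∂μ + (Fintype.card ι : ℝ)⁻¹ * ∫ ω, V (W ω) ∂μ := by
  set k : ℝ := (Fintype.card ι : ℝ)
  have hk : k * k⁻¹ ^ 2 = k⁻¹ := by
    rcases eq_or_ne k 0 with hk0 | hk0
    · simp [hk0]
    · rw [sq, ← mul_assoc, mul_inv_cancel₀ hk0, one_mul]
  rw [h.integral_norm_add_smul_sum_sq hG hξ hA hA2 hW hφ (fun w => (hφ2 w).integrable one_le_two)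
    hφ0 (h.memLp_comp hG hξ hW hφ hφ2 hV hφV hVint)]
  calc ∫ ω, ‖A ω‖ ^ 2 ∂μ + k⁻¹ ^ 2 * ∑ i, ∫ ω, ‖φ (W ω) (ξ i ω)‖ ^ 2 ∂μ
      ≤ ∫ ω, ‖A ω‖ ^ 2 ∂μ + k⁻¹ ^ 2 * ∑ _i : ι, ∫ ω, V (W ω) ∂μ :=
        add_le_add_right (mul_le_mul_of_nonneg_left (Finset.sum_le_sum fun i _ =>
          ((h.indepFun hG hξ hW i).comp measurable_fst measurable_id).integral_norm_sq_comp_le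
            (hW.mono hG le_rfl) (hξ i) (h.map_eq i) hφ hφ2 hV hφV hVint) (sq_nonneg _)) _
    _ = ∫ ω, ‖A ω‖ ^ 2 ∂μ + k⁻¹ * ∫ ω, V (W ω) ∂μ := by
        rw [Finset.sum_const, Finset.card_univ, nsmul_eq_mul, ← mul_assoc, mul_comm _ k, hk]

end BatchMean

section MemLpOfMean

variable {Ω Z ι α E : Type*} {G : MeasurableSpace Ω} [mΩ : MeasurableSpace Ω]
  [MeasurableSpace Z] {μ : Measure Ω} [IsProbabilityMeasure μ] {ξ : ι → Ω → Z} {D : Measure Z}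
  [MeasurableSpace α] [NormedAddCommGroup E] [NormedSpace ℝ E] [MeasurableSpace E]
  [BorelSpace E] [SecondCountableTopology E] {W : Ω → α} {φ : α → Z → E}

theorem IsFreshBatch.exists_memLp_of_memLp_mean [Fintype ι] [Nonempty ι]
    (h : IsFreshBatch G μ ξ D) (hG : G ≤ mΩ) (hξ : ∀ i, Measurable (ξ i))
    (hW : Measurable[G] W) (hφ : Measurable (Function.uncurry φ))
    (hmean : MemLp (fun ω => (Fintype.card ι : ℝ)⁻¹ • ∑ i, φ (W ω) (ξ i ω)) 2 μ) :
    ∃ w, MemLp (φ w) 2 D := by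
  classical
  set c : ℝ := (Fintype.card ι : ℝ)⁻¹
  have hc : c ≠ 0 := inv_ne_zero (Nat.cast_ne_zero.mpr Fintype.card_ne_zero)
  obtain i := Classical.arbitrary ι
  set M : Ω → α × ({j // j ≠ i} → Z) := fun ω => (W ω, fun j => ξ j ω)
  have hM : Measurable M := (hW.mono hG le_rfl).prodMk (measurable_pi_lambda _ fun j => hξ j)
  -- freeze all the data except the `i`-th sample
  set H : (α × ({j // j ≠ i} → Z)) × Z → E :=
    fun p => c • (φ p.1.1 p.2 + ∑ j, φ p.1.1 (p.1.2 j))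
  have hH : Measurable H := by
    refine ((hφ.comp (measurable_fst.fst.prodMk measurable_snd)).add ?_).const_smul c
    exact Finset.measurable_sum _ fun j _ =>
      hφ.comp (measurable_fst.fst.prodMk ((measurable_pi_apply j).comp measurable_fst.snd))
  have hHsq : Measurable fun p => ‖H p‖ ^ 2 := hH.norm.pow_const 2
  have hint : Integrable (fun ω => ‖H (M ω, ξ i ω)‖ ^ 2) μ := by
    refine (hmean.integrable_norm_pow two_ne_zero).congr (ae_of_all _ fun ω => ?_)
    simp [H, M, Fintype.sum_eq_add_sum_subtype_ne _ i]
  have hae := (((h.indepFun hG hξ hW i).integrable_comp_prodMk_iff hM (hξ i)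
    hHsq.aestronglyMeasurable).mp hint).prod_right_ae
  have : IsProbabilityMeasure (μ.map M) := Measure.isProbabilityMeasure_map hM.aemeasurable
  obtain ⟨m, hm⟩ := hae.exists
  refine ⟨m.1, ?_⟩
  rw [← h.map_eq i]
  have hHm : MemLp (fun z => H (m, z)) 2 (μ.map (ξ i)) :=
    (memLp_two_iff_integrable_sq_norm (hH.comp measurable_prodMk_left).aestronglyMeasurable).mpr hm
  convert (hHm.const_smul c⁻¹).sub (memLp_const (∑ j, φ m.1 (m.2 j))) using 1
  funext z
  simp [H, smul_smul, inv_mul_cancel₀ hc]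

end MemLpOfMean

section Epoch

variable {Ω Z P E : Type*} [MeasurableSpace Z] [MeasurableSpace P]
  [NormedAddCommGroup E] [MeasurableSpace E] [BorelSpace E] [SecondCountableTopology E]
  {G : ℕ → MeasurableSpace Ω} {ξ : ℕ → ℕ → Ω → Z} {W : ℕ → Ω → P} {ψ : P → Z → E}
  {e : ℕ → Ω → E} {s n b : ℕ}

theorem measurable_of_recursion [NormedSpace ℝ E] (hGmono : Monotone G)
    (hξ : ∀ t i, Measurable[G (t + 1)] (ξ t i)) (hW : ∀ t, Measurable[G t] (W t))
    (hψ : Measurable (Function.uncurry ψ))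
    (he_s : ∀ ω, e s ω = (n : ℝ)⁻¹ • ∑ i : Fin n, ψ (W s ω) (ξ s i ω))
    (he_succ : ∀ t, s ≤ t → ∀ ω, e (t + 1) ω = e t ω
      + (b : ℝ)⁻¹ • ∑ i : Fin b, (ψ (W (t + 1) ω) (ξ (t + 1) i ω) - ψ (W t ω) (ξ (t + 1) i ω))) :
    ∀ t, s ≤ t → Measurable[G (t + 1)] (e t) := by
  have hψW : ∀ r t i, r ≤ t + 1 → Measurable[G (t + 1)] fun ω => ψ (W r ω) (ξ t i ω) :=
    fun r t i hr => hψ.comp (((hW r).mono (hGmono hr) le_rfl).prodMk (hξ t i))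
  intro t ht
  induction t, ht using Nat.le_induction with
  | base =>
    rw [funext he_s]
    exact (Finset.measurable_sum _ fun (i : Fin n) _ => hψW s s i s.le_succ).fun_const_smul _
  | succ t ht ih =>
    rw [funext (he_succ t ht)]
    exact (ih.mono (hGmono (t + 1).le_succ) le_rfl).add
      ((Finset.measurable_sum _ fun (i : Fin b) _ => (hψW (t + 1) (t + 1) i (t + 1).le_succ).fun_sub
        (hψW t (t + 1) i (by omega))).fun_const_smul _)

variable [mΩ : MeasurableSpace Ω] {μ : Measure Ω} [IsProbabilityMeasure μ] {D : Measure Z}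

theorem not_memLp_of_recursion [NormedSpace ℝ E] (hn : 0 < n) (hG : ∀ t, G t ≤ mΩ)
    (hGmono : Monotone G) (hξ : ∀ t i, Measurable[G (t + 1)] (ξ t i))
    (hW : ∀ t, Measurable[G t] (W t))
    (hfresh_s : IsFreshBatch (G s) μ (fun i : Fin n => ξ s i) D)
    (hfresh : ∀ t, s < t → IsFreshBatch (G t) μ (fun i : Fin b => ξ t i) D)
    (hψ : Measurable (Function.uncurry ψ)) (hψ2 : ¬ ∀ w, MemLp (ψ w) 2 D)
    (hψdiff : ∀ w w', MemLp (fun z => ψ w z - ψ w' z) 2 D)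
    {V : P → P → ℝ} (hV : Measurable (Function.uncurry V))
    (hψV : ∀ w w', ∫ z, ‖ψ w z - ψ w' z‖ ^ 2 ∂D ≤ V w w')
    (hVint : ∀ t, Integrable (fun ω => V (W (t + 1) ω) (W t ω)) μ)
    (he_s : ∀ ω, e s ω = (n : ℝ)⁻¹ • ∑ i : Fin n, ψ (W s ω) (ξ s i ω))
    (he_succ : ∀ t, s ≤ t → ∀ ω, e (t + 1) ω = e t ω
      + (b : ℝ)⁻¹ • ∑ i : Fin b, (ψ (W (t + 1) ω) (ξ (t + 1) i ω) - ψ (W t ω) (ξ (t + 1) i ω))) :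
    ∀ t, s ≤ t → ¬ MemLp (e t) 2 μ := by
  have hξm : ∀ t i, Measurable (ξ t i) := fun t i => (hξ t i).mono (hG _) le_rfl
  intro t ht
  induction t, ht using Nat.le_induction with
  | base =>
    intro hes
    have : Nonempty (Fin n) := ⟨⟨0, hn⟩⟩
    obtain ⟨w, hw⟩ := hfresh_s.exists_memLp_of_memLp_mean (hG s) (fun i => hξm s i) (hW s) hψ
      (by simpa [funext he_s] using hes)
    refine hψ2 fun w' => ?_
    convert hw.sub (hψdiff w w') using 1
    funext z
    simp
  | succ t ht ih =>
    intro he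
    have hW' : Measurable[G (t + 1)] fun ω => (W (t + 1) ω, W t ω) :=
      (hW (t + 1)).prodMk ((hW t).mono (hGmono t.le_succ) le_rfl)
    have hφ : Measurable (Function.uncurry fun (w : P × P) z => ψ w.1 z - ψ w.2 z) :=
      (hψ.comp (measurable_fst.fst.prodMk measurable_snd)).sub
        (hψ.comp (measurable_fst.snd.prodMk measurable_snd))
    have hincr := (hfresh (t + 1) (by omega)).memLp_mean (hG _) (fun i => hξm _ i) hW' hφ
      (fun w => hψdiff w.1 w.2) hV (fun w => hψV w.1 w.2) (hVint t) (b : ℝ)⁻¹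
    refine ih ?_
    convert he.sub hincr using 1
    funext ω
    rw [Pi.sub_apply, he_succ t ht ω, add_sub_cancel_right]

variable [InnerProductSpace ℝ E] [CompleteSpace E] [IsProbabilityMeasure D]

theorem memLp_and_integral_norm_sq_le_of_recursion (hG : ∀ t, G t ≤ mΩ) (hGmono : Monotone G)
    (hξ : ∀ t i, Measurable[G (t + 1)] (ξ t i)) (hW : ∀ t, Measurable[G t] (W t))
    (hfresh_s : IsFreshBatch (G s) μ (fun i : Fin n => ξ s i) D)
    (hfresh : ∀ t, s < t → IsFreshBatch (G t) μ (fun i : Fin b => ξ t i) D)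
    (hψ : Measurable (Function.uncurry ψ)) (hψ2 : ∀ w, MemLp (ψ w) 2 D)
    (hψ0 : ∀ w, ∫ z, ψ w z ∂D = 0) {σ2 : ℝ} (hψσ : ∀ w, ∫ z, ‖ψ w z‖ ^ 2 ∂D ≤ σ2)
    {V : P → P → ℝ} (hV : Measurable (Function.uncurry V))
    (hψV : ∀ w w', ∫ z, ‖ψ w z - ψ w' z‖ ^ 2 ∂D ≤ V w w')
    (hVint : ∀ t, Integrable (fun ω => V (W (t + 1) ω) (W t ω)) μ)
    (he_s : ∀ ω, e s ω = (n : ℝ)⁻¹ • ∑ i : Fin n, ψ (W s ω) (ξ s i ω))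
    (he_succ : ∀ t, s ≤ t → ∀ ω, e (t + 1) ω = e t ω
      + (b : ℝ)⁻¹ • ∑ i : Fin b, (ψ (W (t + 1) ω) (ξ (t + 1) i ω) - ψ (W t ω) (ξ (t + 1) i ω))) :
    ∀ t, s ≤ t → MemLp (e t) 2 μ ∧ ∫ ω, ‖e t ω‖ ^ 2 ∂μ
      ≤ (b : ℝ)⁻¹ * ∑ r ∈ Finset.Ico s t, ∫ ω, V (W (r + 1) ω) (W r ω) ∂μ + (n : ℝ)⁻¹ * σ2 := by
  have hξm : ∀ t i, Measurable (ξ t i) := fun t i => (hξ t i).mono (hG _) le_rfl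
  have he := measurable_of_recursion hGmono hξ hW hψ he_s he_succ
  intro t ht
  induction t, ht using Nat.le_induction with
  | base =>
    have hbound := hfresh_s.integral_norm_add_mean_sq_le (hG s) (fun i => hξm s i)
      (A := fun _ => 0) measurable_const (memLp_const 0) (hW s) hψ hψ2 hψ0 (V := fun _ => σ2)
      measurable_const hψσ (integrable_const σ2)
    simp only [Fintype.card_fin, zero_add] at hbound
    rw [funext he_s]
    refine ⟨hfresh_s.memLp_mean (hG s) (fun i => hξm s i) (hW s) hψ hψ2 (V := fun _ => σ2)
      measurable_const hψσ (integrable_const σ2) _, ?_⟩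
    simpa using hbound
  | succ t ht ih =>
    have hfr := hfresh (t + 1) (by omega)
    have hW' : Measurable[G (t + 1)] fun ω => (W (t + 1) ω, W t ω) :=
      (hW (t + 1)).prodMk ((hW t).mono (hGmono t.le_succ) le_rfl)
    have hφ : Measurable (Function.uncurry fun (w : P × P) z => ψ w.1 z - ψ w.2 z) :=
      (hψ.comp (measurable_fst.fst.prodMk measurable_snd)).sub
        (hψ.comp (measurable_fst.snd.prodMk measurable_snd))
    have hφ2 : ∀ w : P × P, MemLp (fun z => ψ w.1 z - ψ w.2 z) 2 D := fun w =>
      (hψ2 w.1).sub (hψ2 w.2)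
    have hφ0 : ∀ w : P × P, ∫ z, ψ w.1 z - ψ w.2 z ∂D = 0 := fun w => by
      rw [integral_sub ((hψ2 _).integrable one_le_two) ((hψ2 _).integrable one_le_two), hψ0, hψ0,
        sub_zero]
    have hφV : ∀ w : P × P, ∫ z, ‖ψ w.1 z - ψ w.2 z‖ ^ 2 ∂D ≤ Function.uncurry V w := fun w =>
      hψV w.1 w.2
    have hbound := hfr.integral_norm_add_mean_sq_le (hG _) (fun i => hξm _ i) (he t ht) ih.1 hW'
      hφ hφ2 hφ0 hV hφV (hVint t)
    simp only [Fintype.card_fin, Function.uncurry_apply_pair] at hbound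
    rw [funext (he_succ t ht)]
    refine ⟨ih.1.add (hfr.memLp_mean (hG _) (fun i => hξm _ i) hW' hφ hφ2 hV hφV (hVint t) _),
      hbound.trans ?_⟩
    rw [Finset.sum_Ico_succ_top ht, mul_add]
    linarith [ih.2]


theorem integral_norm_sq_le_of_recursion (hn : 0 < n) (hG : ∀ t, G t ≤ mΩ) (hGmono : Monotone G)
    (hξ : ∀ t i, Measurable[G (t + 1)] (ξ t i)) (hW : ∀ t, Measurable[G t] (W t))
    (hfresh_s : IsFreshBatch (G s) μ (fun i : Fin n => ξ s i) D)
    (hfresh : ∀ t, s < t → IsFreshBatch (G t) μ (fun i : Fin b => ξ t i) D)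
    (hψ : Measurable (Function.uncurry ψ)) (hψ0 : ∀ w, ∫ z, ψ w z ∂D = 0) {σ2 : ℝ}
    (hψσ : ∀ w, ∫ z, ‖ψ w z‖ ^ 2 ∂D ≤ σ2) (hψdiff : ∀ w w', MemLp (fun z => ψ w z - ψ w' z) 2 D)
    {V : P → P → ℝ} (hV : Measurable (Function.uncurry V))
    (hψV : ∀ w w', ∫ z, ‖ψ w z - ψ w' z‖ ^ 2 ∂D ≤ V w w')
    (hVint : ∀ t, Integrable (fun ω => V (W (t + 1) ω) (W t ω)) μ)
    (he_s : ∀ ω, e s ω = (n : ℝ)⁻¹ • ∑ i : Fin n, ψ (W s ω) (ξ s i ω))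
    (he_succ : ∀ t, s ≤ t → ∀ ω, e (t + 1) ω = e t ω
      + (b : ℝ)⁻¹ • ∑ i : Fin b, (ψ (W (t + 1) ω) (ξ (t + 1) i ω) - ψ (W t ω) (ξ (t + 1) i ω))) :
    ∀ t, s ≤ t → ∫ ω, ‖e t ω‖ ^ 2 ∂μ
      ≤ (b : ℝ)⁻¹ * ∑ r ∈ Finset.Ico s t, ∫ ω, V (W (r + 1) ω) (W r ω) ∂μ + (n : ℝ)⁻¹ * σ2 := by
  intro t ht
  by_cases hψ2 : ∀ w, MemLp (ψ w) 2 D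
  · exact (memLp_and_integral_norm_sq_le_of_recursion hG hGmono hξ hW hfresh_s hfresh hψ hψ2 hψ0
      hψσ hV hψV hVint he_s he_succ t ht).2
  -- otherwise `‖e t‖ ^ 2` is not integrable and its integral is the junk value `0`
  have he := (measurable_of_recursion hGmono hξ hW hψ he_s he_succ t ht).mono (hG _) le_rfl
  rw [integral_undef fun hint => not_memLp_of_recursion hn hG hGmono hξ hW hfresh_s hfresh hψ hψ2
    hψdiff hV hψV hVint he_s he_succ t ht
    ((memLp_two_iff_integrable_sq_norm he.aestronglyMeasurable).mpr hint)]
  have hV0 : ∀ w w', 0 ≤ V w w' := fun w w' =>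
    (integral_nonneg fun z => sq_nonneg _).trans (hψV w w')
  obtain ⟨ω⟩ := nonempty_of_isProbabilityMeasure μ
  have hσ2 : 0 ≤ σ2 := (integral_nonneg fun z => sq_nonneg _).trans (hψσ (W s ω))
  exact add_nonneg (mul_nonneg (by positivity)
    (Finset.sum_nonneg fun r _ => integral_nonneg fun ω => hV0 _ _))
    (mul_nonneg (by positivity) hσ2)

theorem integral_norm_sub_integral_sq_le_of_recursion (hn : 0 < n) (hb : 0 < b)
    (hG : ∀ t, G t ≤ mΩ) (hGmono : Monotone G) (hξ : ∀ t i, Measurable[G (t + 1)] (ξ t i))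
    (hW : ∀ t, Measurable[G t] (W t))
    (hfresh_s : IsFreshBatch (G s) μ (fun i : Fin n => ξ s i) D)
    (hfresh : ∀ t, s < t → IsFreshBatch (G t) μ (fun i : Fin b => ξ t i) D)
    {Φ : P → Z → E} (hΦ : Measurable (Function.uncurry Φ)) (hΦint : ∀ w, Integrable (Φ w) D)
    {σ2 : ℝ} (hΦσ : ∀ w, ∫ z, ‖Φ w z - ∫ z', Φ w z' ∂D‖ ^ 2 ∂D ≤ σ2)
    {V : P → P → ℝ} (hV : Measurable (Function.uncurry V))
    (hΦV : ∀ w w' z, ‖Φ w z - Φ w' z‖ ^ 2 ≤ V w w')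
    (hVint : ∀ t, Integrable (fun ω => V (W (t + 1) ω) (W t ω)) μ) {v : ℕ → Ω → E}
    (hv_s : ∀ ω, v s ω = (n : ℝ)⁻¹ • ∑ i ∈ Finset.range n, Φ (W s ω) (ξ s i ω))
    (hv_succ : ∀ t, s ≤ t → ∀ ω, v (t + 1) ω = v t ω + (b : ℝ)⁻¹ •
      ∑ i ∈ Finset.range b, (Φ (W (t + 1) ω) (ξ (t + 1) i ω) - Φ (W t ω) (ξ (t + 1) i ω))) :
    ∀ t, s ≤ t → ∫ ω, ‖v t ω - ∫ z, Φ (W t ω) z ∂D‖ ^ 2 ∂μ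
      ≤ (b : ℝ)⁻¹ * ∑ r ∈ Finset.Ico s t, ∫ ω, V (W (r + 1) ω) (W r ω) ∂μ + (n : ℝ)⁻¹ * σ2 := by
  set ψ : P → Z → E := fun w z => Φ w z - ∫ z', Φ w z' ∂D
  have hψ : Measurable (Function.uncurry ψ) :=
    hΦ.sub (hΦ.stronglyMeasurable.integral_prod_right'.measurable.comp measurable_fst)
  have hψ0 : ∀ w, ∫ z, ψ w z ∂D = 0 := fun w => by
    simpa only [average_eq_integral] using integral_sub_average D (Φ w)
  refine integral_norm_sq_le_of_recursion (e := fun t ω => v t ω - ∫ z, Φ (W t ω) z ∂D) hn hG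
    hGmono hξ hW hfresh_s hfresh hψ hψ0 hΦσ
    (fun w w' => memLp_two_centered_sub (hΦint w) (hΦint w') (hΦV w w')) hV
    (fun w w' => integral_norm_centered_sub_sq_le (hΦint w) (hΦint w') (hΦV w w')) hVint
    (fun ω => ?_) (fun t ht ω => ?_)
  · rw [hv_s ω, inv_smul_sum_range_sub hn.ne']
  · rw [hv_succ t ht ω, add_inv_smul_sum_range_sub_sub hb.ne' _ (∫ z, Φ (W t ω) z ∂D)]

end Epoch

section Setting

variable {Ω Z P : Type*} [MeasurableSpace Z] [MeasurableSpace P]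

abbrev batchHistory (ζ : ℕ → ℕ → Ω → Z) (X : ℕ → Ω → P) : ℕ → MeasurableSpace Ω := fun t =>
  (⨆ r < t, ⨆ i, MeasurableSpace.comap (ζ r i) inferInstance) ⊔
    (⨆ r ≤ t, MeasurableSpace.comap (X r) inferInstance)

variable {ζ : ℕ → ℕ → Ω → Z} {X : ℕ → Ω → P}

theorem batchHistory_le [mΩ : MeasurableSpace Ω] (hζ : ∀ t i, Measurable (ζ t i))
    (hX : ∀ t, Measurable (X t)) (t : ℕ) : batchHistory ζ X t ≤ mΩ :=
  sup_le (iSup₂_le fun r _ => iSup_le fun i => (hζ r i).comap_le)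
    (iSup₂_le fun r _ => (hX r).comap_le)

theorem monotone_batchHistory : Monotone (batchHistory ζ X) := fun _ _ htt' =>
  sup_le_sup (iSup₂_le fun r hr => le_iSup₂_of_le r (hr.trans_le htt') le_rfl)
    (iSup₂_le fun r hr => le_iSup₂_of_le r (hr.trans htt') le_rfl)

theorem measurable_batchHistory_iterate (t : ℕ) : Measurable[batchHistory ζ X t] (X t) :=
  Measurable.of_comap_le (le_sup_of_le_right (le_iSup₂_of_le t le_rfl le_rfl))

theorem measurable_batchHistory_sample (t i : ℕ) : Measurable[batchHistory ζ X (t + 1)] (ζ t i) :=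
  Measurable.of_comap_le
    (le_sup_of_le_left (le_iSup₂_of_le t t.lt_succ_self (le_iSup_of_le i le_rfl)))

end Setting

/-- (Lemma B2 of the paper.) Variance bound over one epoch for
SARAH/SPIDER-type recursive estimators: with a full batch of size `n` at the epoch start
`s` and recursive mini-batches of size `b` afterwards, where at each step the fresh batch
is i.i.d. with law `D` and independent (jointly) of the σ-algebra `𝒢 t` generated by all
previous batches together with the iterates up to time `t`, one has for all `t ≥ s`:
`E‖v_t − Φ̄(x_t,y_t)‖² ≤ (2L²/b) Σ_{i=s}^{t−1} E[‖x_{i+1}−x_i‖² + ‖y_{i+1}−y_i‖²] + σ²/n`. -/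
theorem stmt_16 {d p m : ℕ} {Ω : Type*} [mΩ : MeasurableSpace Ω]
    (μP : Measure Ω) [IsProbabilityMeasure μP]
    {Z : Type*} [MeasurableSpace Z]
    (D : Measure Z) [IsProbabilityMeasure D]
    (L σ : ℝ) (s n b : ℕ) (hn : 0 < n) (hb : 0 < b)
    (Φ : EuclideanSpace ℝ (Fin d) → EuclideanSpace ℝ (Fin p) → Z → EuclideanSpace ℝ (Fin m))
    (hΦm : Measurable (fun q : (EuclideanSpace ℝ (Fin d) × EuclideanSpace ℝ (Fin p)) × Z =>
      Φ q.1.1 q.1.2 q.2))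
    (hΦlip : ∀ u₁ u₂ v₁ v₂ z, ‖Φ u₁ v₁ z - Φ u₂ v₂ z‖ ^ 2
      ≤ 2 * L ^ 2 * (‖u₁ - u₂‖ ^ 2 + ‖v₁ - v₂‖ ^ 2))
    (hΦint : ∀ u v, Integrable (fun z => Φ u v z) D)
    (Φbar : EuclideanSpace ℝ (Fin d) → EuclideanSpace ℝ (Fin p) → EuclideanSpace ℝ (Fin m))
    (hΦbar : ∀ u v, Φbar u v = ∫ z, Φ u v z ∂D)
    (hΦvar : ∀ u v, ∫ z, ‖Φ u v z - Φbar u v‖ ^ 2 ∂D ≤ σ ^ 2)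
    (x : ℕ → Ω → EuclideanSpace ℝ (Fin d)) (y : ℕ → Ω → EuclideanSpace ℝ (Fin p))
    (v : ℕ → Ω → EuclideanSpace ℝ (Fin m))
    (ζ : ℕ → ℕ → Ω → Z) (hζm : ∀ t i, Measurable[mΩ] (ζ t i))
    (hxm : ∀ t, Measurable[mΩ] (x t)) (hym : ∀ t, Measurable[mΩ] (y t))
    (hx2 : ∀ t, MemLp (x t) 2 μP) (hy2 : ∀ t, MemLp (y t) 2 μP)
    -- `𝒢 t` is the σ-algebra generated by all batches before time `t` and the iterates up
    -- to time `t`: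
    (𝒢 : ℕ → MeasurableSpace Ω)
    (h𝒢 : ∀ t, 𝒢 t =
      (⨆ r < t, ⨆ i, MeasurableSpace.comap (ζ r i) inferInstance) ⊔
        (⨆ r ≤ t, MeasurableSpace.comap (fun ω => (x r ω, y r ω)) inferInstance))
    -- each sample in the batch at time `t ≥ s` has law `D`:
    (hlaw : ∀ t, s ≤ t → ∀ i < (if t = s then n else b),
      Measure.map (ζ t i) μP = D)
    -- the batch at time `t ≥ s` is (jointly with `𝒢 t`) mutually independent:
    (hind : ∀ t, s ≤ t →
      iIndep (fun j : Option (Fin (if t = s then n else b)) =>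
        j.elim (𝒢 t) (fun i => MeasurableSpace.comap (ζ t (i : ℕ)) inferInstance)) μP)
    -- the SARAH/SPIDER recursion:
    (hvs : ∀ ω, v s ω = (n : ℝ)⁻¹ • ∑ i ∈ Finset.range n, Φ (x s ω) (y s ω) (ζ s i ω))
    (hvt : ∀ t, s < t → ∀ ω, v t ω = v (t - 1) ω
      + (b : ℝ)⁻¹ • ∑ i ∈ Finset.range b,
          (Φ (x t ω) (y t ω) (ζ t i ω) - Φ (x (t - 1) ω) (y (t - 1) ω) (ζ t i ω))) :
    ∀ t, s ≤ t →
      ∫ ω, ‖v t ω - Φbar (x t ω) (y t ω)‖ ^ 2 ∂μP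
        ≤ (2 * L ^ 2 / b) * ∑ i ∈ Finset.Ico s t,
            (∫ ω, (‖x (i + 1) ω - x i ω‖ ^ 2 + ‖y (i + 1) ω - y i ω‖ ^ 2) ∂μP)
          + σ ^ 2 / n := by
  set Q : ℕ → Ω → EuclideanSpace ℝ (Fin d) × EuclideanSpace ℝ (Fin p) :=
    fun r ω => (x r ω, y r ω)
  obtain rfl : 𝒢 = batchHistory ζ Q := funext h𝒢
  obtain rfl : Φbar = fun u v => ∫ z, Φ u v z ∂D := funext₂ hΦbar
  have hfresh_s : IsFreshBatch (batchHistory ζ Q s) μP (fun i : Fin n => ζ s i) D := by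
    have h := hind s le_rfl
    rw [if_pos rfl] at h
    exact ⟨fun i => hlaw s le_rfl i (by simp), h⟩
  have hfresh : ∀ t, s < t → IsFreshBatch (batchHistory ζ Q t) μP (fun i : Fin b => ζ t i) D := by
    intro t ht
    have h := hind t ht.le
    rw [if_neg ht.ne'] at h
    exact ⟨fun i => hlaw t ht.le i (by simp [ht.ne']), h⟩
  have hVint : ∀ t, Integrable (fun ω => 2 * L ^ 2 *
      (‖x (t + 1) ω - x t ω‖ ^ 2 + ‖y (t + 1) ω - y t ω‖ ^ 2)) μP := fun t =>
    ((((hx2 (t + 1)).sub (hx2 t)).integrable_norm_pow two_ne_zero).add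
      (((hy2 (t + 1)).sub (hy2 t)).integrable_norm_pow two_ne_zero)).const_mul _
  intro t ht
  refine (integral_norm_sub_integral_sq_le_of_recursion (Φ := fun q z => Φ q.1 q.2 z)
    (V := fun q q' => 2 * L ^ 2 * (‖q.1 - q'.1‖ ^ 2 + ‖q.2 - q'.2‖ ^ 2)) hn hb
    (batchHistory_le hζm fun r => (hxm r).prodMk (hym r)) monotone_batchHistory
    measurable_batchHistory_sample measurable_batchHistory_iterate hfresh_s hfresh hΦm
    (fun _ => hΦint _ _) (fun _ => hΦvar _ _) (by fun_prop) (fun _ _ => hΦlip _ _ _ _) hVint hvs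
    (fun t ht ω => by simpa using hvt (t + 1) (by omega) ω) t ht).trans_eq ?_
  simp only [integral_const_mul, ← Finset.mul_sum]
  ring
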